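/- For every Q ∈ X and every k ∈ {1,2,3,4,5}, the number of R ∈ X with (Q,R) ∈ R_k equals η_k, where η₁ = (q²−1)(q+1), η₂ = q−1, η₃ = (q²−1)², η₄ = (q³−q)(q−1)², and η₅ = (q³−q)(q−1). -/

import Mathlib

namespace HermitianScheme

variable (K : Type*) [Field K]

/-- The set `X` of points `⟨(1, r₁, r₂, r₃)⟩` of the Hermitian surface `H(3,q²)`
not collinear with `P = ⟨(0,0,0,1)⟩`, parametrized by triples `(r₁, r₂, r₃)` with
`r₃ + r₃^q = r₁^(q+1) + r₂^(q+1)`. -/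
def Xset (q : ℕ) : Set (K × K × K) :=
  {r | r.2.2 + r.2.2 ^ q = r.1 ^ (q + 1) + r.2.1 ^ (q + 1)}

/-- `w(R,S) = s₃^q - r₁ s₁^q - r₂ s₂^q + r₃`, a representative of Shult's
invariant `z(P,R,S) ∈ K^*/F^*`. -/
def wfun (q : ℕ) (R S : K × K × K) : K :=
  S.2.2 ^ q - R.1 * S.1 ^ q - R.2.1 * S.2.1 ^ q + R.2.2

/-- The relations `R₀, …, R₅` of the association scheme `𝔛_P` on `X`. -/
def Rel (q : ℕ) : ℕ → (K × K × K) → (K × K × K) → Prop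
  | 0 => fun R S => R = S
  | 1 => fun R S => R ≠ S ∧ wfun K q R S = 0
  | 2 => fun R S => R ≠ S ∧ R.1 = S.1 ∧ R.2.1 = S.2.1
  | 3 => fun R S => wfun K q R S ≠ 0 ∧ wfun K q R S ^ q = - wfun K q R S ∧
      ¬ (R.1 = S.1 ∧ R.2.1 = S.2.1)
  | 4 => fun R S => wfun K q R S ^ q ≠ wfun K q R S ∧ wfun K q R S ^ q ≠ - wfun K q R S
  | 5 => fun R S => wfun K q R S ≠ 0 ∧ wfun K q R S ^ q = wfun K q R S
  | _ => fun _ _ => False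

/-! ### Auxiliary counting lemmas -/

section Aux

open Finset Polynomial

private lemma pigeon {α : Type*} (s : Finset α) (f : α → ℕ) (m : ℕ)
    (hle : ∀ a ∈ s, f a ≤ m) (hsum : s.card * m ≤ ∑ a ∈ s, f a) :
    ∀ a ∈ s, f a = m := by
  intro a ha
  by_contra hne
  have h1 : ∑ b ∈ s, f b < ∑ _b ∈ s, m :=
    Finset.sum_lt_sum hle ⟨a, ha, lt_of_le_of_ne (hle a ha) hne⟩
  rw [Finset.sum_const, smul_eq_mul] at h1
  omega

private lemma ncard_filter {α : Type*} [Fintype α] (P : α → Prop) [DecidablePred P] :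
    {x | P x}.ncard = (Finset.univ.filter P).card := by
  rw [← Set.ncard_coe_finset]
  congr 1
  ext x
  simp

private lemma my_ncard_prod {α β : Type*} (s : Set α) (t : Set β) :
    (s ×ˢ t).ncard = s.ncard * t.ncard := by
  calc (s ×ˢ t).ncard = Nat.card (s ×ˢ t : Set _) := (Nat.card_coe_set_eq _).symm
    _ = Nat.card (s × t) := Nat.card_congr (Equiv.Set.prod s t)
    _ = Nat.card s * Nat.card t := Nat.card_prod _ _
    _ = s.ncard * t.ncard := by rw [Nat.card_coe_set_eq, Nat.card_coe_set_eq]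

private lemma ncard_preimage {α β : Type*} {f : α → β} (hf : Function.Bijective f) (T : Set β) :
    (f ⁻¹' T).ncard = T.ncard := by
  rw [← Set.ncard_image_of_injective (f ⁻¹' T) hf.1, Set.image_preimage_eq T hf.2]

private lemma card_filter_root_le {K : Type*} [Field K] [Fintype K] [DecidableEq K]
    (f : Polynomial K) (hf : f ≠ 0) {n : ℕ} (hd : f.natDegree ≤ n)
    (P : K → Prop) [DecidablePred P] (hP : ∀ x, P x → f.eval x = 0) :
    (Finset.univ.filter P).card ≤ n := by
  refine le_trans (Polynomial.card_le_degree_of_subset_roots (p := f) ?_) hd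
  intro x hx
  rw [Finset.mem_val, Finset.mem_filter] at hx
  exact (Polynomial.mem_roots hf).mpr (hP x hx.2)

private lemma trace_fix_count {K : Type*} [Field K] [Fintype K] {q : ℕ} (hq2 : 2 ≤ q)
    (hK : Fintype.card K = q ^ 2)
    (hadd : ∀ x y : K, (x + y) ^ q = x ^ q + y ^ q) (hqq : ∀ x : K, (x ^ q) ^ q = x) :
    {x : K | x ^ q = x}.ncard = q ∧
      ∀ t : K, t ^ q = t → {x : K | x + x ^ q = t}.ncard = q := by
  classical
  set Fix : Finset K := univ.filter (fun t : K => t ^ q = t) with hFixdef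
  have hFixle : Fix.card ≤ q := by
    refine card_filter_root_le (X ^ q - X) ?_ ?_ _ ?_
    · intro h
      have hc : (X ^ q - X : K[X]).coeff q = 1 := by
        rw [Polynomial.coeff_sub, Polynomial.coeff_X_pow]
        simp only [Polynomial.coeff_X]
        rw [if_neg (show ¬ 1 = q by omega)]
        simp
      rw [h] at hc; simp at hc
    · compute_degree
      omega
    · intro x hx; simp [sub_eq_zero, hx]
  have hfible : ∀ t : K, (univ.filter (fun x : K => x + x ^ q = t)).card ≤ q := by
    intro t
    refine card_filter_root_le (X ^ q + X - C t) ?_ ?_ _ ?_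
    · intro h
      have hc : (X ^ q + X - C t : K[X]).coeff q = 1 := by
        rw [Polynomial.coeff_sub, Polynomial.coeff_add, Polynomial.coeff_X_pow]
        simp only [Polynomial.coeff_X, Polynomial.coeff_C]
        rw [if_neg (show ¬ 1 = q by omega), if_neg (show ¬ q = 0 by omega)]
        simp
      rw [h] at hc; simp at hc
    · compute_degree
      omega
    · intro x hx; simp [sub_eq_zero]; linear_combination hx
  have hmem : ∀ x : K, x ∈ (univ : Finset K) → x + x ^ q ∈ Fix := by
    intro x _
    simp only [hFixdef, Finset.mem_filter, Finset.mem_univ, true_and]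
    rw [hadd, hqq, add_comm]
  have hsum : ∑ t ∈ Fix, (univ.filter (fun x : K => x + x ^ q = t)).card = q ^ 2 := by
    rw [← hK, ← Finset.card_univ]
    exact (Finset.card_eq_sum_card_fiberwise hmem).symm
  have hle2 : q ^ 2 ≤ Fix.card * q := by
    rw [← hsum]
    calc ∑ t ∈ Fix, (univ.filter (fun x : K => x + x ^ q = t)).card
        ≤ ∑ _t ∈ Fix, q := Finset.sum_le_sum (fun t _ => hfible t)
      _ = Fix.card * q := by rw [Finset.sum_const, smul_eq_mul]
  have hFixq : Fix.card = q := by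
    have h1 : Fix.card * q ≤ q * q := Nat.mul_le_mul_right q hFixle
    have h2 : q * q = q ^ 2 := (sq q).symm
    have h3 : Fix.card * q = q * q := by omega
    exact Nat.eq_of_mul_eq_mul_right (by omega) h3
  have hall := pigeon Fix (fun t => (univ.filter (fun x : K => x + x ^ q = t)).card) q
    (fun t _ => hfible t) (by rw [hsum, hFixq, sq])
  constructor
  · rw [ncard_filter]; exact hFixq
  · intro t ht
    rw [ncard_filter]
    exact hall t (by simp [hFixdef, ht])

private lemma norm_fiber_count {K : Type*} [Field K] [Fintype K] {q : ℕ} (hq2 : 2 ≤ q)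
    (hK : Fintype.card K = q ^ 2) (hqq : ∀ x : K, (x ^ q) ^ q = x)
    (hfix : {x : K | x ^ q = x}.ncard = q) :
    ∀ t : K, t ^ q = t → t ≠ 0 → {x : K | x ^ (q + 1) = t}.ncard = q + 1 := by
  classical
  set Fix' : Finset K := univ.filter (fun t : K => t ^ q = t ∧ t ≠ 0) with hF'def
  have hF'card : Fix'.card + 1 = q := by
    have h0 : (univ.filter (fun t : K => t ^ q = t)).card = q := by
      rw [← ncard_filter]; exact hfix
    have he : Fix' = (univ.filter (fun t : K => t ^ q = t)).erase 0 := by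
      ext x
      simp only [hF'def, Finset.mem_filter, Finset.mem_erase, Finset.mem_univ, true_and]
      tauto
    have h0mem : (0 : K) ∈ univ.filter (fun t : K => t ^ q = t) := by
      simp [zero_pow (show q ≠ 0 by omega)]
    rw [he, Finset.card_erase_of_mem h0mem, h0]
    omega
  set U : Finset K := univ.filter (fun x : K => x ≠ 0) with hUdef
  have hUcard : U.card + 1 = q ^ 2 := by
    have hUe : U = Finset.univ.erase 0 := by ext x; simp [hUdef]
    rw [hUe, Finset.card_erase_of_mem (Finset.mem_univ 0), Finset.card_univ, hK]
    have : 0 < q ^ 2 := pow_pos (by omega) 2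
    omega
  have hmem : ∀ x ∈ U, x ^ (q + 1) ∈ Fix' := by
    intro x hx
    simp only [hUdef, Finset.mem_filter, Finset.mem_univ, true_and] at hx
    simp only [hF'def, Finset.mem_filter, Finset.mem_univ, true_and]
    refine ⟨?_, pow_ne_zero _ hx⟩
    rw [pow_succ, mul_pow, hqq, mul_comm]
  have hsum : ∑ t ∈ Fix', (U.filter (fun x : K => x ^ (q + 1) = t)).card = U.card :=
    (Finset.card_eq_sum_card_fiberwise hmem).symm
  have hfible : ∀ t : K, t ≠ 0 → (U.filter (fun x : K => x ^ (q + 1) = t)).card ≤ q + 1 := by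
    intro t _
    rw [hUdef, Finset.filter_filter]
    refine card_filter_root_le (X ^ (q + 1) - C t) ?_ ?_ _ ?_
    · intro h
      have hc : (X ^ (q + 1) - C t : K[X]).coeff (q + 1) = 1 := by
        simp [Polynomial.coeff_C]
      rw [h] at hc; simp at hc
    · compute_degree
    · intro x hx; simp [sub_eq_zero, hx.2]
  have hUeq : U.card = Fix'.card * (q + 1) := by
    have h1 : (U.card : ℤ) + 1 = (q : ℤ) ^ 2 := by exact_mod_cast hUcard
    have h2 : (Fix'.card : ℤ) + 1 = (q : ℤ) := by exact_mod_cast hF'card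
    have h3 : (U.card : ℤ) = (Fix'.card : ℤ) * ((q : ℤ) + 1) := by
      linear_combination h1 - ((q : ℤ) + 1) * h2
    exact_mod_cast h3
  have hall := pigeon Fix' (fun t => (U.filter (fun x : K => x ^ (q + 1) = t)).card) (q + 1)
    (fun t ht => hfible t (by simp only [hF'def, Finset.mem_filter] at ht; exact ht.2.2))
    (by rw [hsum, hUeq])
  intro t ht ht0
  have htF : t ∈ Fix' := by simp [hF'def, ht, ht0]
  have hcard := hall t htF
  rw [ncard_filter]
  have hEq : (univ.filter fun x : K => x ^ (q + 1) = t) = U.filter (fun x => x ^ (q + 1) = t) := by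
    ext x
    simp only [Finset.mem_filter, hUdef, Finset.mem_univ, true_and]
    constructor
    · intro hx
      refine ⟨?_, hx⟩
      intro h0
      rw [h0, zero_pow (show q + 1 ≠ 0 by omega)] at hx
      exact ht0 hx.symm
    · tauto
  rw [hEq]
  exact hcard

private lemma field_facts {K : Type*} [Field K] [Fintype K] {q : ℕ} (hq : IsPrimePow q)
    (hodd : Odd q) (hK : Fintype.card K = q ^ 2) :
    (∀ x y : K, (x + y) ^ q = x ^ q + y ^ q) ∧ (∀ x : K, (x ^ q) ^ q = x) ∧ (2 : K) ≠ 0 := by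
  obtain ⟨p, n, hp, hn, hpn⟩ := hq
  have hp' : p.Prime := Nat.prime_iff.mpr hp
  have hqq : ∀ x : K, (x ^ q) ^ q = x := by
    intro x
    rw [← pow_mul, ← pow_two, ← hK]
    exact FiniteField.pow_card x
  have hr : ringChar K = p := by
    obtain ⟨m, hrp, hcard⟩ := FiniteField.card K (ringChar K)
    have hdvd : p ∣ Fintype.card K := by
      rw [hK, ← hpn]
      exact dvd_pow (dvd_pow_self p (by omega)) (by omega)
    rw [hcard] at hdvd
    have := hp'.dvd_of_dvd_pow hdvd
    exact ((Nat.prime_dvd_prime_iff_eq hp' hrp).mp this).symm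
  haveI : CharP K p := hr ▸ ringChar.charP K
  haveI : Fact p.Prime := ⟨hp'⟩
  have hadd : ∀ x y : K, (x + y) ^ q = x ^ q + y ^ q := by
    intro x y
    rw [← hpn]
    exact add_pow_char_pow x y p n
  have hpodd : p ≠ 2 := by
    intro h2
    have heven : Even q := by
      rw [← hpn, h2]
      exact (Nat.even_pow.mpr ⟨even_two, by omega⟩)
    exact (Nat.not_even_iff_odd.mpr hodd) heven
  have h2 : (2 : K) ≠ 0 := Ring.two_ne_zero (by rw [hr]; exact hpodd)
  exact ⟨hadd, hqq, h2⟩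

private lemma hsub_of {K : Type*} [Field K] {q : ℕ}
    (hadd : ∀ x y : K, (x + y) ^ q = x ^ q + y ^ q) (hodd : Odd q) :
    ∀ x y : K, (x - y) ^ q = x ^ q - y ^ q := by
  intro x y
  rw [sub_eq_add_neg, hadd, hodd.neg_pow, ← sub_eq_add_neg]

private lemma trace_w {K : Type*} [Field K] {q : ℕ}
    (hadd : ∀ x y : K, (x + y) ^ q = x ^ q + y ^ q) (hodd : Odd q)
    (hqq : ∀ x : K, (x ^ q) ^ q = x) (a b c s₁ s₂ s₃ : K)
    (hQ : c + c ^ q = a ^ (q + 1) + b ^ (q + 1)) :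
    ((s₃ ^ q - a * s₁ ^ q - b * s₂ ^ q + c) + (s₃ ^ q - a * s₁ ^ q - b * s₂ ^ q + c) ^ q)
      - ((s₁ - a) ^ (q + 1) + (s₂ - b) ^ (q + 1))
      = (s₃ + s₃ ^ q) - (s₁ ^ (q + 1) + s₂ ^ (q + 1)) := by
  have hsub := hsub_of hadd hodd
  have hw : (s₃ ^ q - a * s₁ ^ q - b * s₂ ^ q + c) ^ q
      = s₃ - a ^ q * s₁ - b ^ q * s₂ + c ^ q := by
    rw [hadd, hsub, hsub, mul_pow, mul_pow, hqq, hqq, hqq]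
  rw [hw]
  have e1 : ∀ x y : K, (x - y) ^ (q + 1) = (x ^ q - y ^ q) * (x - y) := by
    intro x y
    rw [pow_succ, hsub]
  rw [e1, e1, pow_succ s₁ q, pow_succ s₂ q]
  rw [pow_succ a q, pow_succ b q] at hQ
  linear_combination hQ

private lemma f_bij {K : Type*} [Field K] {q : ℕ}
    (hadd : ∀ x y : K, (x + y) ^ q = x ^ q + y ^ q) (hodd : Odd q)
    (hqq : ∀ x : K, (x ^ q) ^ q = x) (a b c : K) :
    Function.Bijective (fun R : K × K × K =>
      (R.1 - a, R.2.1 - b, R.2.2 ^ q - a * R.1 ^ q - b * R.2.1 ^ q + c)) := by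
  have hsub := hsub_of hadd hodd
  rw [Function.bijective_iff_has_inverse]
  refine ⟨fun y => (y.1 + a, y.2.1 + b,
    (y.2.2 - c) ^ q + a ^ q * (y.1 + a) + b ^ q * (y.2.1 + b)), ?_, ?_⟩
  · rintro ⟨s₁, s₂, s₃⟩
    refine Prod.ext (by simp) (Prod.ext (by simp) ?_)
    show (s₃ ^ q - a * s₁ ^ q - b * s₂ ^ q + c - c) ^ q
        + a ^ q * (s₁ - a + a) + b ^ q * (s₂ - b + b) = s₃
    have h1 : s₃ ^ q - a * s₁ ^ q - b * s₂ ^ q + c - c = s₃ ^ q - a * s₁ ^ q - b * s₂ ^ q := by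
      ring
    rw [h1, hsub, hsub, mul_pow, mul_pow, hqq, hqq, hqq]
    ring
  · rintro ⟨u, v, w⟩
    refine Prod.ext (by simp) (Prod.ext (by simp) ?_)
    show ((w - c) ^ q + a ^ q * (u + a) + b ^ q * (v + b)) ^ q
        - a * (u + a) ^ q - b * (v + b) ^ q + c = w
    rw [hadd, hadd, mul_pow, mul_pow, hqq, hqq, hqq]
    ring

end Aux

set_option maxHeartbeats 1000000 in
/-- Lemma 1: the valencies of the scheme `𝔛_P`. -/
theorem statement3 (q : ℕ) (hq : IsPrimePow q) (hodd : Odd q)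
    (K : Type*) [Field K] [Fintype K] (hK : Fintype.card K = q ^ 2) :
    ∀ Q ∈ Xset K q, ∀ k : Fin 6, k ≠ 0 →
      ({R | R ∈ Xset K q ∧ Rel K q k.val Q R}.ncard : ℤ) =
        ![0,
          ((q : ℤ) ^ 2 - 1) * ((q : ℤ) + 1),
          (q : ℤ) - 1,
          ((q : ℤ) ^ 2 - 1) ^ 2,
          ((q : ℤ) ^ 3 - (q : ℤ)) * ((q : ℤ) - 1) ^ 2,
          ((q : ℤ) ^ 3 - (q : ℤ)) * ((q : ℤ) - 1)] k := by
  intro Q hQ k hk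
  obtain ⟨hadd, hqq, h2⟩ := field_facts hq hodd hK
  have hsub := hsub_of hadd hodd
  have hq2 : 2 ≤ q := hq.two_le
  have hq0 : q ≠ 0 := by omega
  obtain ⟨a, b, c⟩ := Q
  have hQ' : c + c ^ q = a ^ (q + 1) + b ^ (q + 1) := hQ
  set f : K × K × K → K × K × K := fun R =>
    (R.1 - a, R.2.1 - b, R.2.2 ^ q - a * R.1 ^ q - b * R.2.1 ^ q + c) with hfdef
  have hfbij : Function.Bijective f := f_bij hadd hodd hqq a b c
  have hfQ : f (a, b, c) = (0, 0, 0) := by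
    refine Prod.ext (by simp [hfdef]) (Prod.ext (by simp [hfdef]) ?_)
    show c ^ q - a * a ^ q - b * b ^ q + c = 0
    rw [pow_succ, pow_succ] at hQ'
    linear_combination hQ'
  have hwfun : ∀ R : K × K × K, wfun K q (a, b, c) R = (f R).2.2 := fun _ => rfl
  have hf1 : ∀ R : K × K × K, (f R).1 = R.1 - a := fun _ => rfl
  have hf2 : ∀ R : K × K × K, (f R).2.1 = R.2.1 - b := fun _ => rfl
  have hXiff : ∀ R : K × K × K, R ∈ Xset K q ↔
      (f R).2.2 + (f R).2.2 ^ q = (f R).1 ^ (q + 1) + (f R).2.1 ^ (q + 1) := by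
    intro R
    have h := trace_w hadd hodd hqq a b c R.1 R.2.1 R.2.2 hQ'
    have h1 : (f R).1 = R.1 - a := rfl
    have h2' : (f R).2.1 = R.2.1 - b := rfl
    have h3 : (f R).2.2 = R.2.2 ^ q - a * R.1 ^ q - b * R.2.1 ^ q + c := rfl
    constructor
    · intro hX
      have hX' : R.2.2 + R.2.2 ^ q = R.1 ^ (q + 1) + R.2.1 ^ (q + 1) := hX
      rw [h1, h2', h3]
      linear_combination h + hX'
    · intro hY
      rw [h1, h2', h3] at hY
      show R.2.2 + R.2.2 ^ q = R.1 ^ (q + 1) + R.2.1 ^ (q + 1)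
      linear_combination hY - h
  have hneQ : ∀ R : K × K × K, ((a, b, c) ≠ R) ↔ f R ≠ (0, 0, 0) := by
    intro R
    rw [← hfQ]
    constructor
    · intro h hc
      exact h (hfbij.1 hc).symm
    · intro h hc
      exact h (by rw [hc])
  obtain ⟨hfix, htrace⟩ := trace_fix_count hq2 hK hadd hqq
  have hnorm := norm_fiber_count hq2 hK hqq hfix
  have hNfix : ∀ x : K, (x ^ (q + 1)) ^ q = x ^ (q + 1) := by
    intro x
    rw [pow_succ, mul_pow, hqq, mul_comm]
  have h2q : (2 : K) ^ q = 2 := by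
    calc (2 : K) ^ q = (1 + 1 : K) ^ q := by norm_num
      _ = (1 : K) ^ q + (1 : K) ^ q := hadd 1 1
      _ = 2 := by norm_num
  have hhalf : ∀ t : K, t ^ q = t → (t / 2) ^ q = t / 2 := by
    intro t ht
    rw [div_pow, ht, h2q]
  have ht2 : ∀ t : K, t / 2 + t / 2 = t := by
    intro t
    rw [← add_div, ← two_mul, mul_div_cancel_left₀ _ h2]
  -- the basic sets
  set A : Set (K × K) := {uv | uv.1 ^ (q + 1) + uv.2 ^ (q + 1) = 0 ∧ uv ≠ 0} with hAdef
  set B : Set K := {w | w + w ^ q = 0 ∧ w ≠ 0} with hBdef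
  set Cs : Set (K × K) := {uv | uv.1 ^ (q + 1) + uv.2 ^ (q + 1) ≠ 0} with hCdef
  set U' : Set K := {u : K | u ≠ 0} with hU'def
  -- cardinalities
  have hU'card : U'.ncard + 1 = q ^ 2 := by
    have h0 : U' = Set.univ \ {0} := by ext x; simp [hU'def]
    rw [h0, Set.ncard_diff_singleton_add_one (Set.mem_univ (0 : K)), Set.ncard_univ,
      Nat.card_eq_fintype_card, hK]
  have hBcard : B.ncard + 1 = q := by
    have h0 : {w : K | w + w ^ q = 0}.ncard = q := htrace 0 (zero_pow hq0)
    have hBd : B = {w : K | w + w ^ q = 0} \ {0} := by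
      ext w
      simp only [hBdef, Set.mem_setOf_eq, Set.mem_diff, Set.mem_singleton_iff]
    rw [hBd, Set.ncard_diff_singleton_add_one (by simp [zero_pow hq0] :
      (0 : K) ∈ {w : K | w + w ^ q = 0}), h0]
  have hAcard : A.ncard = U'.ncard * (q + 1) := by
    have hM : {x : K | x ^ (q + 1) = -1}.ncard = q + 1 :=
      hnorm (-1) (by rw [hodd.neg_pow, one_pow]) (by simp)
    have himg : A = (fun p : K × K => (p.1, p.1 * p.2)) '' (U' ×ˢ {x : K | x ^ (q + 1) = -1}) := by
      ext ⟨u, v⟩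
      simp only [hAdef, Set.mem_setOf_eq, Set.mem_image, Set.mem_prod, hU'def, Prod.mk.injEq]
      constructor
      · rintro ⟨hsum, hne⟩
        have hu : u ≠ 0 := by
          intro h0
          apply hne
          rw [h0, zero_pow (show q + 1 ≠ 0 by omega), zero_add] at hsum
          have : v = 0 := pow_eq_zero_iff (show q + 1 ≠ 0 by omega) |>.mp hsum
          rw [h0, this]
          rfl
        refine ⟨(u, u⁻¹ * v), ⟨hu, ?_⟩, rfl, ?_⟩
        · have hupow : u ^ (q + 1) ≠ 0 := pow_ne_zero _ hu
          rw [mul_pow, inv_pow, show v ^ (q + 1) = -(u ^ (q + 1)) by linear_combination hsum,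
            mul_neg, inv_mul_cancel₀ hupow]
        · field_simp
      · rintro ⟨⟨u', x⟩, ⟨hu', hx⟩, h1, h2⟩
        subst h1
        subst h2
        constructor
        · rw [mul_pow, hx]
          ring
        · intro h0
          exact hu' (congrArg Prod.fst h0)
    have hinj : Set.InjOn (fun p : K × K => (p.1, p.1 * p.2)) (U' ×ˢ {x : K | x ^ (q + 1) = -1}) := by
      rintro ⟨u, x⟩ ⟨hu, _⟩ ⟨u', x'⟩ ⟨hu', _⟩ hpq
      simp only [Prod.mk.injEq] at hpq
      obtain ⟨h1, h2⟩ := hpq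
      subst h1
      exact Prod.ext rfl (mul_left_cancel₀ hu h2)
    rw [himg, Set.ncard_image_of_injOn hinj, my_ncard_prod, hM]
  have hCcard : Cs.ncard + (A.ncard + 1) = q ^ 2 * q ^ 2 := by
    have hP : {uv : K × K | uv.1 ^ (q + 1) + uv.2 ^ (q + 1) = 0} = insert 0 A := by
      ext ⟨u, v⟩
      simp only [Set.mem_setOf_eq, Set.mem_insert_iff, hAdef]
      constructor
      · intro hsum
        by_cases h0 : (u, v) = 0
        · exact Or.inl h0
        · exact Or.inr ⟨hsum, h0⟩
      · rintro (h0 | ⟨hsum, _⟩)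
        · rw [show u = 0 from congrArg Prod.fst h0, show v = 0 from congrArg Prod.snd h0]
          simp [zero_pow (show q + 1 ≠ 0 by omega)]
        · exact hsum
    have hcompl : Cs = {uv : K × K | uv.1 ^ (q + 1) + uv.2 ^ (q + 1) = 0}ᶜ := by
      ext uv; simp [hCdef]
    have h0A : (0 : K × K) ∉ A := by simp [hAdef]
    have hmain := Set.ncard_add_ncard_compl {uv : K × K | uv.1 ^ (q + 1) + uv.2 ^ (q + 1) = 0}
    have h1 : ({uv : K × K | uv.1 ^ (q + 1) + uv.2 ^ (q + 1) = 0}).ncard = A.ncard + 1 := by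
      rw [hP, Set.ncard_insert_of_notMem h0A]
    have h2c : Cs.ncard = ({uv : K × K | uv.1 ^ (q + 1) + uv.2 ^ (q + 1) = 0})ᶜ.ncard := by
      rw [hcompl]
    have hcardKK : Nat.card (K × K) = q ^ 2 * q ^ 2 := by
      rw [Nat.card_eq_fintype_card, Fintype.card_prod, hK]
    omega
  -- integer versions
  have hU'z : ((U'.ncard : ℤ)) = (q : ℤ) ^ 2 - 1 := by
    have : ((U'.ncard : ℤ)) + 1 = ((q : ℤ)) ^ 2 := by exact_mod_cast hU'card
    linarith
  have hBz : ((B.ncard : ℤ)) = (q : ℤ) - 1 := by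
    have : ((B.ncard : ℤ)) + 1 = (q : ℤ) := by exact_mod_cast hBcard
    linarith
  have hAz : ((A.ncard : ℤ)) = ((q : ℤ) ^ 2 - 1) * ((q : ℤ) + 1) := by
    have : ((A.ncard : ℤ)) = ((U'.ncard : ℤ)) * ((q : ℤ) + 1) := by exact_mod_cast hAcard
    rw [this, hU'z]
  have hCz : ((Cs.ncard : ℤ)) = ((q : ℤ) ^ 3 - (q : ℤ)) * ((q : ℤ) - 1) := by
    have h' : ((Cs.ncard : ℤ)) + (((A.ncard : ℤ)) + 1) = (q : ℤ) ^ 2 * (q : ℤ) ^ 2 := by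
      exact_mod_cast hCcard
    rw [hAz] at h'
    linarith [h']
  fin_cases k
  · exact absurd rfl hk
  -- k = 1
  · have hset : {R | R ∈ Xset K q ∧ Rel K q 1 (a, b, c) R}
        = f ⁻¹' ((fun uv : K × K => (uv.1, uv.2, (0 : K))) '' A) := by
      ext R
      simp only [Set.mem_setOf_eq, Set.mem_preimage, Set.mem_image, Rel]
      constructor
      · rintro ⟨hX, hne, hw⟩
        rw [hwfun R] at hw
        refine ⟨((f R).1, (f R).2.1), ⟨?_, ?_⟩, ?_⟩
        · have hh := (hXiff R).mp hX
          rw [hw] at hh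
          simpa [zero_pow hq0] using hh.symm
        · intro h0
          apply (hneQ R).mp hne
          simp only [Prod.ext_iff, Prod.fst_zero, Prod.snd_zero] at h0
          exact Prod.ext h0.1 (Prod.ext h0.2 hw)
        · exact Prod.ext rfl (Prod.ext rfl hw.symm)
      · rintro ⟨⟨u, v⟩, ⟨hsum0, hne0⟩, heq⟩
        have h1 : (f R).1 = u := by rw [← heq]
        have h2' : (f R).2.1 = v := by rw [← heq]
        have h3 : (f R).2.2 = 0 := by rw [← heq]
        refine ⟨?_, ?_, ?_⟩
        · rw [hXiff R, h1, h2', h3, hsum0]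
          simp [zero_pow hq0]
        · rw [hneQ R]
          intro h0
          apply hne0
          have hu : u = 0 := by rw [← h1, h0]
          have hv : v = 0 := by rw [← h2', h0]
          rw [hu, hv]; rfl
        · rw [hwfun R]; exact h3
    rw [hset, ncard_preimage hfbij,
      Set.ncard_image_of_injective _ (by
        rintro ⟨u, v⟩ ⟨u', v'⟩ h
        simp only [Prod.mk.injEq] at h
        exact Prod.ext h.1 h.2.1)]
    show ((A.ncard : ℤ)) = ((q : ℤ) ^ 2 - 1) * ((q : ℤ) + 1)
    exact hAz
  -- k = 2
  · have hset : {R | R ∈ Xset K q ∧ Rel K q 2 (a, b, c) R}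
        = f ⁻¹' ((fun w : K => ((0 : K), (0 : K), w)) '' B) := by
      ext R
      simp only [Set.mem_setOf_eq, Set.mem_preimage, Set.mem_image, Rel]
      constructor
      · rintro ⟨hX, hne, ha1, hb1⟩
        have hu : (f R).1 = 0 := by
          rw [hf1 R]
          exact sub_eq_zero.mpr ha1.symm
        have hv : (f R).2.1 = 0 := by
          rw [hf2 R]
          exact sub_eq_zero.mpr hb1.symm
        refine ⟨(f R).2.2, ⟨?_, ?_⟩, ?_⟩
        · have hh := (hXiff R).mp hX
          rw [hu, hv] at hh
          rw [hh]
          simp [zero_pow (show q + 1 ≠ 0 by omega)]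
        · intro h0
          apply (hneQ R).mp hne
          exact Prod.ext hu (Prod.ext hv h0)
        · exact Prod.ext hu.symm (Prod.ext hv.symm rfl)
      · rintro ⟨w, ⟨hw0, hwne⟩, heq⟩
        have h1 : (f R).1 = 0 := by rw [← heq]
        have h2' : (f R).2.1 = 0 := by rw [← heq]
        have h3 : (f R).2.2 = w := by rw [← heq]
        refine ⟨?_, ?_, ?_, ?_⟩
        · rw [hXiff R, h1, h2', h3, hw0]
          simp [zero_pow (show q + 1 ≠ 0 by omega)]
        · rw [hneQ R]
          intro h0
          apply hwne
          rw [← h3, h0]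
        · rw [hf1 R] at h1
          exact (sub_eq_zero.mp h1).symm
        · rw [hf2 R] at h2'
          exact (sub_eq_zero.mp h2').symm
    rw [hset, ncard_preimage hfbij,
      Set.ncard_image_of_injective _ (by
        intro w w' h
        simpa using congrArg (fun y : K × K × K => y.2.2) h)]
    show ((B.ncard : ℤ)) = (q : ℤ) - 1
    exact hBz
  -- k = 3
  · have hset : {R | R ∈ Xset K q ∧ Rel K q 3 (a, b, c) R}
        = f ⁻¹' ((fun p : (K × K) × K => (p.1.1, p.1.2, p.2)) '' (A ×ˢ B)) := by
      ext R
      simp only [Set.mem_setOf_eq, Set.mem_preimage, Set.mem_image, Set.mem_prod, Rel]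
      constructor
      · rintro ⟨hX, hw0, hwq, hnab⟩
        rw [hwfun R] at hw0 hwq
        have hsum0 : (f R).1 ^ (q + 1) + (f R).2.1 ^ (q + 1) = 0 := by
          have hh := (hXiff R).mp hX
          rw [hwq] at hh
          linear_combination -hh
        refine ⟨(((f R).1, (f R).2.1), (f R).2.2), ⟨⟨hsum0, ?_⟩, ?_, hw0⟩, rfl⟩
        · intro h0
          apply hnab
          simp only [Prod.ext_iff, Prod.fst_zero, Prod.snd_zero] at h0
          obtain ⟨hu, hv⟩ := h0
          have hu' : R.1 - a = 0 := hu
          have hv' : R.2.1 - b = 0 := hv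
          exact ⟨(sub_eq_zero.mp hu').symm, (sub_eq_zero.mp hv').symm⟩
        · rw [hwq]; ring
      · rintro ⟨⟨⟨u, v⟩, w⟩, ⟨⟨hsum0, huv⟩, hw0, hwne⟩, heq⟩
        have h1 : (f R).1 = u := by rw [← heq]
        have h2' : (f R).2.1 = v := by rw [← heq]
        have h3 : (f R).2.2 = w := by rw [← heq]
        rw [hwfun R, h3]
        refine ⟨?_, hwne, ?_, ?_⟩
        · rw [hXiff R, h1, h2', h3, hsum0]
          linear_combination hw0
        · linear_combination hw0
        · rintro ⟨ha1, hb1⟩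
          apply huv
          have hu : u = 0 := by
            rw [← h1, hf1 R]
            exact sub_eq_zero.mpr ha1.symm
          have hv : v = 0 := by
            rw [← h2', hf2 R]
            exact sub_eq_zero.mpr hb1.symm
          rw [hu, hv]; rfl
    rw [hset, ncard_preimage hfbij,
      Set.ncard_image_of_injective _ (by
        rintro ⟨⟨u, v⟩, w⟩ ⟨⟨u', v'⟩, w'⟩ h
        simp only [Prod.mk.injEq] at h
        exact Prod.ext (Prod.ext h.1 h.2.1) h.2.2),
      my_ncard_prod]
    show (((A.ncard * B.ncard : ℕ)) : ℤ) = ((q : ℤ) ^ 2 - 1) ^ 2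
    push_cast
    rw [hAz, hBz]
    ring
  -- k = 4
  · have hset : {R | R ∈ Xset K q ∧ Rel K q 4 (a, b, c) R}
        = f ⁻¹' ((fun p : (K × K) × K =>
            (p.1.1, p.1.2, p.2 + (p.1.1 ^ (q + 1) + p.1.2 ^ (q + 1)) / 2)) '' (Cs ×ˢ B)) := by
      ext R
      simp only [Set.mem_setOf_eq, Set.mem_preimage, Set.mem_image, Set.mem_prod, Rel]
      constructor
      · rintro ⟨hX, hw1, hw2⟩
        rw [hwfun R] at hw1 hw2
        have hXt := (hXiff R).mp hX
        have htfix : ((f R).1 ^ (q + 1) + (f R).2.1 ^ (q + 1)) ^ q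
            = (f R).1 ^ (q + 1) + (f R).2.1 ^ (q + 1) := by
          rw [hadd, hNfix, hNfix]
        have htne : (f R).1 ^ (q + 1) + (f R).2.1 ^ (q + 1) ≠ 0 := by
          intro h0
          apply hw2
          rw [h0] at hXt
          linear_combination hXt
        refine ⟨(((f R).1, (f R).2.1),
          (f R).2.2 - ((f R).1 ^ (q + 1) + (f R).2.1 ^ (q + 1)) / 2), ⟨htne, ?_, ?_⟩, ?_⟩
        · rw [hsub, hhalf _ htfix]
          linear_combination hXt - ht2 ((f R).1 ^ (q + 1) + (f R).2.1 ^ (q + 1))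
        · intro h0
          apply hw1
          have hw : (f R).2.2 = ((f R).1 ^ (q + 1) + (f R).2.1 ^ (q + 1)) / 2 :=
            sub_eq_zero.mp h0
          rw [hw, hhalf _ htfix]
        · refine Prod.ext rfl (Prod.ext rfl ?_)
          show (f R).2.2 - ((f R).1 ^ (q + 1) + (f R).2.1 ^ (q + 1)) / 2
            + ((f R).1 ^ (q + 1) + (f R).2.1 ^ (q + 1)) / 2 = (f R).2.2
          ring
      · rintro ⟨⟨⟨u, v⟩, z⟩, ⟨htne, hz0, hzne⟩, heq⟩
        have h1 : (f R).1 = u := by rw [← heq]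
        have h2' : (f R).2.1 = v := by rw [← heq]
        have h3 : (f R).2.2 = z + (u ^ (q + 1) + v ^ (q + 1)) / 2 := by rw [← heq]
        have htfix : (u ^ (q + 1) + v ^ (q + 1)) ^ q = u ^ (q + 1) + v ^ (q + 1) := by
          rw [hadd, hNfix, hNfix]
        have hwq : (f R).2.2 ^ q = -z + (u ^ (q + 1) + v ^ (q + 1)) / 2 := by
          rw [h3, hadd, hhalf _ htfix]
          have hzq : z ^ q = -z := by linear_combination hz0
          rw [hzq]
        rw [hwfun R]
        refine ⟨?_, ?_, ?_⟩
        · rw [hXiff R, h1, h2', hwq, h3]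
          linear_combination ht2 (u ^ (q + 1) + v ^ (q + 1))
        · rw [hwq, h3]
          intro hcon
          apply hzne
          have h2z : (2 : K) * z = 0 := by linear_combination -hcon
          rcases mul_eq_zero.mp h2z with h | h
          · exact absurd h h2
          · exact h
        · rw [hwq, h3]
          intro hcon
          apply htne
          exact (by linear_combination hcon - ht2 (u ^ (q + 1) + v ^ (q + 1)) :
            u ^ (q + 1) + v ^ (q + 1) = 0)
    rw [hset, ncard_preimage hfbij,
      Set.ncard_image_of_injective _ (by
        rintro ⟨⟨u, v⟩, z⟩ ⟨⟨u', v'⟩, z'⟩ h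
        simp only [Prod.mk.injEq] at h
        obtain ⟨h1, h2', h3⟩ := h
        subst h1; subst h2'
        exact Prod.ext rfl (by apply add_right_cancel h3)),
      my_ncard_prod]
    show (((Cs.ncard * B.ncard : ℕ)) : ℤ) = ((q : ℤ) ^ 3 - (q : ℤ)) * ((q : ℤ) - 1) ^ 2
    push_cast
    rw [hCz, hBz]
    ring
  -- k = 5
  · have hset : {R | R ∈ Xset K q ∧ Rel K q 5 (a, b, c) R}
        = f ⁻¹' ((fun uv : K × K =>
            (uv.1, uv.2, (uv.1 ^ (q + 1) + uv.2 ^ (q + 1)) / 2)) '' Cs) := by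
      ext R
      simp only [Set.mem_setOf_eq, Set.mem_preimage, Set.mem_image, Rel]
      constructor
      · rintro ⟨hX, hw0, hwq⟩
        rw [hwfun R] at hw0 hwq
        have hXt := (hXiff R).mp hX
        have ht2w : (f R).1 ^ (q + 1) + (f R).2.1 ^ (q + 1) = 2 * (f R).2.2 := by
          rw [← hXt, hwq]; ring
        refine ⟨((f R).1, (f R).2.1), ?_, ?_⟩
        · show (f R).1 ^ (q + 1) + (f R).2.1 ^ (q + 1) ≠ 0
          rw [ht2w]
          exact mul_ne_zero h2 hw0
        · refine Prod.ext rfl (Prod.ext rfl ?_)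
          show ((f R).1 ^ (q + 1) + (f R).2.1 ^ (q + 1)) / 2 = (f R).2.2
          rw [ht2w]
          exact mul_div_cancel_left₀ _ h2
      · rintro ⟨⟨u, v⟩, htne, heq⟩
        have h1 : (f R).1 = u := by rw [← heq]
        have h2' : (f R).2.1 = v := by rw [← heq]
        have h3 : (f R).2.2 = (u ^ (q + 1) + v ^ (q + 1)) / 2 := by rw [← heq]
        have htfix : (u ^ (q + 1) + v ^ (q + 1)) ^ q = u ^ (q + 1) + v ^ (q + 1) := by
          rw [hadd, hNfix, hNfix]
        rw [hwfun R]
        refine ⟨?_, ?_, ?_⟩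
        · rw [hXiff R, h1, h2', h3, hhalf _ htfix]
          exact ht2 _
        · rw [h3]
          exact div_ne_zero htne h2
        · rw [h3]
          exact hhalf _ htfix
    rw [hset, ncard_preimage hfbij,
      Set.ncard_image_of_injective _ (by
        rintro ⟨u, v⟩ ⟨u', v'⟩ h
        simp only [Prod.mk.injEq] at h
        exact Prod.ext h.1 h.2.1)]
    show ((Cs.ncard : ℤ)) = ((q : ℤ) ^ 3 - (q : ℤ)) * ((q : ℤ) - 1)
    exact hCz

end HermitianScheme
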